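/- arXiv:1308.0789 — 2 statements merged into one kernel-verified Lean document; each statement's English description precedes it below -/
import Mathlib

section
/- Let X be a real Banach space and D ⊆ X a bounded, closed, convex set containing at least two points. Then a set C is a completion of D if and only if C is a completion of D^c; that is, D and D^c have the same completions. -/
open Metric Set Bornology

variable {X : Type*}

/-- `frad A x` is r(A,x) = sup of distances from x to points of A. -/
noncomputable def frad [NormedAddCommGroup X] (A : Set X) (x : X) : ℝ :=
  sSup ((fun a => dist x a) '' A)

/-- `rad A` is the (Chebyshev) radius r(A) = inf over x in the space of r(A,x). -/
noncomputable def rad [NormedAddCommGroup X] (A : Set X) : ℝ :=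
  sInf (Set.range fun x => frad A x)

/-- `selfRad A` is the self-radius r(A,A) = inf over x ∈ A of r(A,x). -/
noncomputable def selfRad [NormedAddCommGroup X] (A : Set X) : ℝ :=
  sInf ((fun x => frad A x) '' A)

/-- The ball intersection D' of D. -/
noncomputable def ballInt [NormedAddCommGroup X] (D : Set X) : Set X :=
  ⋂ x ∈ D, closedBall x (Metric.diam D)

/-- The ball hull D^c of D. -/
noncomputable def ballHull [NormedAddCommGroup X] (D : Set X) : Set X :=
  ⋂ x ∈ {y : X | D ⊆ closedBall y (Metric.diam D)}, closedBall x (Metric.diam D)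

/-- A set is diametrically maximal (complete) if adjoining any outside point
increases the diameter. -/
def IsDM [NormedAddCommGroup X] (C : Set X) : Prop :=
  ∀ x ∉ C, Metric.diam C < Metric.diam (insert x C)

/-- `C` is a completion of `D`: a diametrically maximal set containing `D`
with the same diameter. -/
def IsCompletion [NormedAddCommGroup X] (D C : Set X) : Prop :=
  IsDM C ∧ D ⊆ C ∧ Metric.diam C = Metric.diam D

lemma subset_ballHull [NormedAddCommGroup X] (D : Set X) : D ⊆ ballHull D := by
  intro d hd
  simp only [ballHull, mem_iInter]
  intro x hx
  exact hx hd

lemma ballHull_subset_ball [NormedAddCommGroup X] {D : Set X} (hDb : IsBounded D)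
    {d : X} (hd : d ∈ D) : ballHull D ⊆ closedBall d (Metric.diam D) := by
  intro y hy
  simp only [ballHull, mem_iInter] at hy
  exact hy d (fun z hz => mem_closedBall.2 (dist_le_diam_of_mem hDb hz hd))

/-- each point of the hull is an admissible center -/
lemma hull_center [NormedAddCommGroup X] {D : Set X} (hDb : IsBounded D)
    {y : X} (hy : y ∈ ballHull D) : D ⊆ closedBall y (Metric.diam D) := by
  intro d hd
  have := ballHull_subset_ball hDb hd hy
  simpa [mem_closedBall, dist_comm] using this

lemma diam_ballHull [NormedAddCommGroup X] {D : Set X} (hDb : IsBounded D)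
    (hDn : D.Nonempty) : Metric.diam (ballHull D) = Metric.diam D := by
  obtain ⟨d, hd⟩ := hDn
  have hbdd : IsBounded (ballHull D) :=
    (isBounded_closedBall (x := d) (r := Metric.diam D)).subset
      (ballHull_subset_ball hDb hd)
  apply le_antisymm
  · refine Metric.diam_le_of_forall_dist_le Metric.diam_nonneg ?_
    intro y hy z hz
    have : z ∈ closedBall y (Metric.diam D) := by
      simp only [ballHull, mem_iInter] at hz
      exact hz y (hull_center hDb hy)
    simpa [mem_closedBall, dist_comm] using this
  · exact Metric.diam_mono (subset_ballHull D) hbdd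

/-- D and D^c have the same completions. -/
theorem stmt16 [NormedAddCommGroup X] [NormedSpace ℝ X] [CompleteSpace X]
    (D : Set X) (hDb : IsBounded D) (hDcl : IsClosed D) (hDcv : Convex ℝ D)
    (hDnt : D.Nontrivial) :
    ∀ C : Set X, IsCompletion D C ↔ IsCompletion (ballHull D) C := by
  intro C
  have hDpos : 0 < Metric.diam D := by
    obtain ⟨x, hx, y, hy, hxy⟩ := hDnt
    calc 0 < dist x y := dist_pos.2 hxy
    _ ≤ Metric.diam D := dist_le_diam_of_mem hDb hx hy
  have hdiamHull : Metric.diam (ballHull D) = Metric.diam D :=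
    diam_ballHull hDb hDnt.nonempty
  constructor
  · rintro ⟨hDM, hsub, hdiam⟩
    have hCb : IsBounded C := by
      by_contra hC
      rw [Metric.diam_eq_zero_of_unbounded hC] at hdiam
      exact absurd hdiam.symm (ne_of_gt hDpos)
    -- ballHull D ⊆ C
    have hhull : ballHull D ⊆ C := by
      intro y hy
      by_contra hyC
      have hlt := hDM y hyC
      have key : ∀ c ∈ C, dist y c ≤ Metric.diam C := by
        intro c hc
        have hcenter : D ⊆ closedBall c (Metric.diam D) := fun d hd =>
          mem_closedBall.2 (by
            have := dist_le_diam_of_mem hCb (hsub hd) hc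
            rw [hdiam] at this; simpa [dist_comm] using this)
        have : y ∈ closedBall c (Metric.diam D) := by
          simp only [ballHull, mem_iInter] at hy
          exact hy c hcenter
        rw [hdiam]
        simpa [mem_closedBall] using this
      have hle : Metric.diam (insert y C) ≤ Metric.diam C := by
        refine Metric.diam_le_of_forall_dist_le Metric.diam_nonneg ?_
        intro a ha b hb
        rcases Set.mem_insert_iff.1 ha with ha' | ha' <;>
          rcases Set.mem_insert_iff.1 hb with hb' | hb'
        · subst ha'; subst hb'; simp [Metric.diam_nonneg]
        · subst ha'; exact key b hb'
        · subst hb'; rw [dist_comm]; exact key a ha'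
        · exact dist_le_diam_of_mem hCb ha' hb'
      exact absurd hle (not_le.2 hlt)
    exact ⟨hDM, hhull, by rw [hdiam, hdiamHull]⟩
  · rintro ⟨hDM, hsub, hdiam⟩
    exact ⟨hDM, (subset_ballHull D).trans hsub, by rw [hdiam, hdiamHull]⟩
end

section
/- Let X be a real Banach space and D ⊆ X a bounded, closed, convex set containing at least two points. If D has a unique completion, then δ(C_D) ≤ 2·r(D) − δ(D) ≤ δ(D), where C_D is the set of centers of D. Consequently, if δ(C_D) > δ(D), then D has more than one completion. -/
open Metric Set Bornology

variable {X : Type*}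

section Aux
variable [NormedAddCommGroup X]

lemma frad_bddAbove {A : Set X} (hA : IsBounded A) (x : X) :
    BddAbove ((fun a => dist x a) '' A) := by
  obtain ⟨R, hR⟩ := hA.subset_closedBall x
  exact ⟨R, by rintro y ⟨a, ha, rfl⟩; simpa [dist_comm] using hR ha⟩

lemma dist_le_frad {A : Set X} (hA : IsBounded A) {a : X} (x : X) (ha : a ∈ A) :
    dist x a ≤ frad A x :=
  le_csSup (frad_bddAbove hA x) ⟨a, ha, rfl⟩

lemma frad_nonneg {A : Set X} (hA : IsBounded A) (hne : A.Nonempty) (x : X) :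
    0 ≤ frad A x := by
  obtain ⟨a, ha⟩ := hne
  exact le_trans dist_nonneg (dist_le_frad hA x ha)

lemma rad_le_frad {A : Set X} (hA : IsBounded A) (hne : A.Nonempty) (x : X) :
    rad A ≤ frad A x :=
  csInf_le ⟨0, by rintro y ⟨z, rfl⟩; exact frad_nonneg hA hne z⟩ ⟨x, rfl⟩

lemma diam_le_two_frad {A : Set X} (hA : IsBounded A) (hne : A.Nonempty) (x : X) :
    Metric.diam A ≤ 2 * frad A x := by
  apply Metric.diam_le_of_forall_dist_le (by linarith [frad_nonneg hA hne x])
  intro a ha b hb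
  calc dist a b ≤ dist x a + dist x b := dist_triangle_left a b x
    _ ≤ frad A x + frad A x := add_le_add (dist_le_frad hA x ha) (dist_le_frad hA x hb)
    _ = 2 * frad A x := by ring

lemma diam_le_two_rad {A : Set X} (hA : IsBounded A) (hne : A.Nonempty) :
    Metric.diam A ≤ 2 * rad A := by
  obtain ⟨a, ha⟩ := hne
  have h1 : Metric.diam A / 2 ≤ rad A := by
    apply le_csInf (range_nonempty _)
    rintro y ⟨x, rfl⟩
    linarith [diam_le_two_frad hA ⟨a, ha⟩ x]
  linarith

lemma rad_le_diam {A : Set X} (hA : IsBounded A) (hne : A.Nonempty) :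
    rad A ≤ Metric.diam A := by
  obtain ⟨a, ha⟩ := hne
  refine le_trans (rad_le_frad hA ⟨a, ha⟩ a) ?_
  apply csSup_le (Set.Nonempty.image _ ⟨a, ha⟩)
  rintro y ⟨b, hb, rfl⟩
  exact dist_le_diam_of_mem hA ha hb

/-- Zorn: every bounded superset with the same diameter extends to a completion. -/
lemma exists_completion_superset {D E : Set X} (hDne : D.Nonempty) (hDE : D ⊆ E)
    (hEb : IsBounded E) (hEd : Metric.diam E ≤ Metric.diam D) :
    ∃ C, IsCompletion D C ∧ E ⊆ C := by
  obtain ⟨x₀, hx₀⟩ := hDne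
  set S : Set (Set X) := {F | E ⊆ F ∧ IsBounded F ∧ Metric.diam F ≤ Metric.diam D} with hS
  have hzorn : ∃ m, E ⊆ m ∧ Maximal (· ∈ S) m := by
    apply zorn_subset_nonempty
    · intro c hcS hchain hcne
      obtain ⟨s₀, hs₀⟩ := hcne
      have hsub : ∀ F ∈ c, F ⊆ closedBall x₀ (Metric.diam D) := by
        intro F hF f hf
        have hFS := hcS hF
        exact mem_closedBall.2 <| le_trans
          (dist_le_diam_of_mem hFS.2.1 hf (hFS.1 (hDE hx₀))) hFS.2.2
      refine ⟨⋃₀ c, ⟨?_, ?_, ?_⟩, fun s hs => subset_sUnion_of_mem hs⟩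
      · exact (hcS hs₀).1.trans (subset_sUnion_of_mem hs₀)
      · exact (isBounded_closedBall).subset (sUnion_subset hsub)
      · apply Metric.diam_le_of_forall_dist_le Metric.diam_nonneg
        rintro p hp q hq
        obtain ⟨s, hs, hps⟩ := hp
        obtain ⟨t, ht, hqt⟩ := hq
        rcases hchain.total hs ht with h | h
        · exact le_trans (dist_le_diam_of_mem (hcS ht).2.1 (h hps) hqt) (hcS ht).2.2
        · exact le_trans (dist_le_diam_of_mem (hcS hs).2.1 hps (h hqt)) (hcS hs).2.2
    · exact ⟨Subset.rfl, hEb, hEd⟩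
  obtain ⟨M, hEM, hMmem, hMmax⟩ := hzorn
  have hMb : IsBounded M := hMmem.2.1
  have hDM : D ⊆ M := hDE.trans hEM
  have hMd : Metric.diam M = Metric.diam D :=
    le_antisymm hMmem.2.2 (Metric.diam_mono hDM hMb)
  refine ⟨M, ⟨?_, hDM, hMd⟩, hEM⟩
  intro x hx
  by_contra h
  push_neg at h
  have hins : insert x M ∈ S :=
    ⟨hEM.trans (subset_insert x M), hMb.insert x, le_trans h hMmem.2.2⟩
  have := hMmax hins (subset_insert x M)
  exact hx (this (mem_insert x M))

end Aux

/-- if D has a unique completion then δ(C_D) ≤ 2r(D) − δ(D) ≤ δ(D);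
consequently, if δ(C_D) > δ(D) then D has more than one completion. -/
theorem stmt18 [NormedAddCommGroup X] [NormedSpace ℝ X] [CompleteSpace X]
    (D : Set X) (hDb : IsBounded D) (hDcl : IsClosed D) (hDcv : Convex ℝ D)
    (hDnt : D.Nontrivial) :
    ((∃! C : Set X, IsCompletion D C) →
      Metric.diam {c : X | frad D c = rad D} ≤ 2 * rad D - Metric.diam D ∧
      2 * rad D - Metric.diam D ≤ Metric.diam D) ∧
    (Metric.diam {c : X | frad D c = rad D} > Metric.diam D →
      ∃ C₁ C₂ : Set X, IsCompletion D C₁ ∧ IsCompletion D C₂ ∧ C₁ ≠ C₂) := by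
  obtain ⟨a₀, ha₀, b₀, hb₀, hab₀⟩ := hDnt
  have hDne : D.Nonempty := ⟨a₀, ha₀⟩
  set δ := Metric.diam D with hδ
  set r := rad D with hr
  have hrδ : r ≤ δ := rad_le_diam hDb hDne
  have hδ2r : δ ≤ 2 * r := diam_le_two_rad hDb hDne
  -- Part 1
  have part1 : (∃! C : Set X, IsCompletion D C) →
      Metric.diam {c : X | frad D c = rad D} ≤ 2 * rad D - Metric.diam D ∧
      2 * rad D - Metric.diam D ≤ Metric.diam D := by
    rintro ⟨C, hC, hCuniq⟩
    have hδpos : 0 < δ :=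
      lt_of_lt_of_le (dist_pos.2 hab₀) (dist_le_diam_of_mem hDb ha₀ hb₀)
    have hCb : IsBounded C := by
      by_contra h
      have h0 := Metric.diam_eq_zero_of_unbounded h
      rw [hC.2.2, ← hδ] at h0
      linarith
    refine ⟨?_, by linarith⟩
    apply Metric.diam_le_of_forall_dist_le (by linarith)
    intro c₁ h₁ c₂ h₂
    simp only [Set.mem_setOf_eq] at h₁ h₂
    rcases eq_or_ne c₁ c₂ with rfl | hne
    · simp; linarith
    -- key: points z₁ = c₁ - s•u and z₂ = c₂ + s•u lie in completions
    set v : X := c₂ - c₁ with hv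
    have hv0 : v ≠ 0 := sub_ne_zero.2 (Ne.symm hne)
    set u : X := ‖v‖⁻¹ • v with hu
    have hunorm : ‖u‖ = 1 := by
      rw [hu, norm_smul, norm_inv, norm_norm, inv_mul_cancel₀ (norm_ne_zero_iff.2 hv0)]
    set s : ℝ := δ - r with hs
    have hs0 : 0 ≤ s := by linarith
    set z₁ : X := c₁ - s • u with hz₁
    set z₂ : X := c₂ + s • u with hz₂
    have hsu : ‖s • u‖ = s := by rw [norm_smul, hunorm, mul_one, Real.norm_of_nonneg hs0]
    have hkey : ∀ (c z : X), frad D c = r → dist z c = s →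
        ∃ Cz, IsCompletion D Cz ∧ z ∈ Cz := by
      intro c z hc hzc
      have hins : Metric.diam (insert z D) ≤ δ := by
        apply Metric.diam_le_of_forall_dist_le Metric.diam_nonneg
        have hzx : ∀ x ∈ D, dist z x ≤ δ := by
          intro x hx
          calc dist z x ≤ dist z c + dist c x := dist_triangle z c x
            _ ≤ s + r := add_le_add hzc.le (by rw [← hc]; exact dist_le_frad hDb c hx)
            _ = δ := by rw [hs]; ring
        rintro p (rfl | hp) q (rfl | hq)
        · rw [dist_self]; exact hδpos.le
        · exact hzx q hq
        · rw [dist_comm]; exact hzx p hp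
        · exact dist_le_diam_of_mem hDb hp hq
      obtain ⟨Cz, hCz, hsub⟩ := exists_completion_superset hDne (subset_insert z D)
        (hDb.insert z) hins
      exact ⟨Cz, hCz, hsub (mem_insert z D)⟩
    obtain ⟨C₁, hC₁, hz₁C⟩ := hkey c₁ z₁ h₁ (by
      rw [hz₁, dist_eq_norm, sub_sub_cancel_left, norm_neg, hsu])
    obtain ⟨C₂, hC₂, hz₂C⟩ := hkey c₂ z₂ h₂ (by
      rw [hz₂, dist_eq_norm, add_sub_cancel_left, hsu])
    have e₁ : C₁ = C := hCuniq C₁ hC₁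
    have e₂ : C₂ = C := hCuniq C₂ hC₂
    have hdz : dist z₁ z₂ ≤ δ := by
      rw [hδ, ← hC.2.2]
      exact dist_le_diam_of_mem hCb (e₁ ▸ hz₁C) (e₂ ▸ hz₂C)
    have hveq : v = ‖v‖ • u := by
      rw [hu, smul_smul, mul_inv_cancel₀ (norm_ne_zero_iff.2 hv0), one_smul]
    have hz21 : z₂ - z₁ = (‖v‖ + 2 * s) • u := by
      have h1 : z₂ - z₁ = v + (2 * s) • u := by rw [hz₂, hz₁, hv]; module
      rw [h1, add_smul]
      exact congrArg (fun w => w + (2 * s) • u) hveq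
    have hdzeq : dist z₁ z₂ = ‖v‖ + 2 * s := by
      rw [dist_eq_norm, ← norm_neg, neg_sub, hz21, norm_smul, hunorm, mul_one,
        Real.norm_of_nonneg (by positivity)]
    have : ‖v‖ ≤ 2 * r - δ := by rw [hdzeq] at hdz; rw [hs] at hdz; linarith
    calc dist c₁ c₂ = ‖v‖ := by rw [dist_eq_norm, hv, ← norm_neg, neg_sub]
      _ ≤ 2 * r - δ := this
  refine ⟨part1, ?_⟩
  intro hgt
  by_contra h
  push_neg at h
  obtain ⟨C₀, hC₀, _⟩ := exists_completion_superset hDne (Subset.rfl) hDb le_rfl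
  have huniq : ∃! C : Set X, IsCompletion D C :=
    ⟨C₀, hC₀, fun C hC => h C C₀ hC hC₀⟩
  obtain ⟨hle, hle2⟩ := part1 huniq
  linarith
end
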